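/- arXiv:2212.10329 — 7 statements merged into one kernel-verified Lean document; each statement's English description precedes it below -/
import Mathlib

section
/- Let ρ : F_2 → GL(2, ℤ) be the homomorphism determined by ρ(X_1) = [[1, 2], [0, 1]] and ρ(X_2) = [[1, 0], [2, 1]], and fix a natural number p ≥ 2. For every w ∈ F_2 with w ≠ 1 there exists N ≥ 1 such that the entrywise reduction of ρ(w) modulo p^N is not the identity in GL(2, ℤ/p^Nℤ). Equivalently, the intersection over all N ≥ 1 of the normal subgroups G_N := ρ^{−1}(Γ(2, p^N ℤ)) of F_2 is the trivial subgroup. -/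
/-!
Sanov's ping-pong argument shows that `ρ` is injective: both generators are transvections, a
nonzero power of `[[1,2],[0,1]]` sends the integer vectors with `|x| < |y|` to vectors with
`|y| < |x|`, and a nonzero power of `[[1,0],[2,1]]` does the reverse. Hence `ρ(w) - 1` has a
nonzero entry `d` when `w ≠ 1`, and `p^N ∤ d` for `N` large since `p ≥ 2`.
-/

/-- The matrix `[[1, 2], [0, 1]]` as an element of `GL(2, ℤ)`. -/
def stmt7M1 : Matrix.GeneralLinearGroup (Fin 2) ℤ :=
  ⟨!![1, 2; 0, 1], !![1, -2; 0, 1], by decide, by decide⟩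

/-- The matrix `[[1, 0], [2, 1]]` as an element of `GL(2, ℤ)`. -/
def stmt7M2 : Matrix.GeneralLinearGroup (Fin 2) ℤ :=
  ⟨!![1, 0; 2, 1], !![1, 0; -2, 1], by decide, by decide⟩

open scoped Pointwise Function

theorem FreeGroup.injective_lift_of_zpow_ping_pong {ι G α : Type*} [Nontrivial ι] [Group G]
    [MulAction G α] (a : ι → G) (X : ι → Set α) (hX : ∀ i, (X i).Nonempty)
    (hXdisj : Pairwise (Disjoint on X))
    (hpp : Pairwise fun i j => ∀ n : ℤ, n ≠ 0 → a i ^ n • X j ⊆ X i) :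
    Function.Injective (FreeGroup.lift a) := by
  have hlift : FreeGroup.lift a =
      (Monoid.CoprodI.lift fun i => FreeGroup.lift fun _ : Unit => a i).comp
        freeGroupEquivCoprodI.toMonoidHom := by
    ext i
    simp
  rw [hlift, MonoidHom.coe_comp]
  refine .comp (Monoid.CoprodI.lift_injective_of_ping_pong _ ?_ X hX hXdisj ?_)
    freeGroupEquivCoprodI.injective
  · inhabit ι
    refine .inr ⟨default, ?_⟩
    rw [FreeGroup.freeGroupUnitEquivInt.cardinal_eq, Cardinal.mk_denumerable]
    exact Cardinal.natCast_le_aleph0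
  · intro i j hij
    refine FreeGroup.freeGroupUnitEquivInt.symm.forall_congr_right.mp fun n hn => ?_
    have hsymm : FreeGroup.freeGroupUnitEquivInt.symm n = FreeGroup.of () ^ n := rfl
    simp only [hsymm, map_zpow, FreeGroup.lift_apply_of] at hn ⊢
    exact hpp hij n (by rintro rfl; simp at hn)

theorem abs_lt_abs_add_mul {R : Type*} [CommRing R] [LinearOrder R] [IsStrictOrderedRing R]
    {x y k : R} (hk : 2 ≤ |k|) (h : |x| < |y|) : |y| < |x + k * y| := by
  have h1 : 2 * |y| ≤ |k * y| := by
    rw [abs_mul]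
    exact mul_le_mul_of_nonneg_right hk (abs_nonneg y)
  have h2 : |k * y| ≤ |x + k * y| + |x| := by
    simpa using abs_add_le (x + k * y) (-x)
  linarith

theorem Int.exists_pow_not_dvd {p : ℕ} (hp : 2 ≤ p) {d : ℤ} (hd : d ≠ 0) :
    ∃ N, 1 ≤ N ∧ ¬ (p : ℤ) ^ N ∣ d := by
  obtain ⟨N, hN⟩ := (Int.finiteMultiplicity_iff (a := p) (b := d)).mpr
    ⟨by rw [Int.natAbs_natCast]; omega, hd⟩
  exact ⟨N + 1, by omega, hN⟩

namespace Matrix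

variable {n R : Type*} [Fintype n] [DecidableEq n] [CommRing R]

theorem transvection_mulVec_apply_self (i j : n) (c : R) (v : n → R) :
    (transvection i j c *ᵥ v) i = v i + c * v j := by
  simp [transvection, add_mulVec, single_mulVec]

theorem transvection_mulVec_apply_of_ne {i k : n} (hk : k ≠ i) (j : n) (c : R) (v : n → R) :
    (transvection i j c *ᵥ v) k = v k := by
  simp [transvection, add_mulVec, single_mulVec, hk]

namespace GeneralLinearGroup

theorem val_zpow_of_val_eq_transvection {g : GL n R} {i j : n} (hij : i ≠ j) {c : R}
    (hg : (g : Matrix n n R) = transvection i j c) (m : ℤ) :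
    ((g ^ m : GL n R) : Matrix n n R) = transvection i j (m * c) := by
  have hg_inv : ((g⁻¹ : GL n R) : Matrix n n R) = transvection i j (-c) :=
    Units.inv_eq_of_mul_eq_one_right <| by
      rw [hg]
      exact (transvection_mul_transvection_same _ _ hij c (-c)).trans (by simp)
  induction m using Int.induction_on with
  | zero => simp
  | succ k ih =>
    rw [_root_.zpow_add_one, Units.val_mul, ih, hg,
      transvection_mul_transvection_same _ _ hij]
    congr 1
    push_cast
    ring
  | pred k ih =>
    rw [_root_.zpow_sub_one, Units.val_mul, ih, hg_inv,
      transvection_mul_transvection_same _ _ hij]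
    congr 1
    push_cast
    ring

theorem zpow_smul_subset_of_val_eq_transvection [LinearOrder R] [IsStrictOrderedRing R]
    {g : GL n R} {i j : n} (hij : i ≠ j) {c : R} (hg : (g : Matrix n n R) = transvection i j c)
    (hc : 2 ≤ |c|) {m : ℤ} (hm : m ≠ 0) :
    g ^ m • {v : n → R | |v i| < |v j|} ⊆ {v | |v j| < |v i|} := by
  rintro _ ⟨v, hv : |v i| < |v j|, rfl⟩
  have hmc : 2 ≤ |(m : R) * c| := by
    have hm' : (1 : R) ≤ |(m : R)| := by
      rw [← Int.cast_abs]
      exact_mod_cast Int.one_le_abs hm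
    calc 2 ≤ |c| := hc
      _ ≤ |(m : R)| * |c| := le_mul_of_one_le_left (abs_nonneg c) hm'
      _ = |(m : R) * c| := (abs_mul _ _).symm
  simp only [Set.mem_ofPred_eq, smul_eq_mulVec,
    val_zpow_of_val_eq_transvection hij hg, transvection_mulVec_apply_of_ne hij.symm,
    transvection_mulVec_apply_self]
  exact abs_lt_abs_add_mul hmc hv

theorem map_intCast_eq_one_iff (m : ℕ) (g : GL n ℤ) :
    map (Int.castRingHom (ZMod m)) g = 1 ↔
      ∀ i j, (m : ℤ) ∣ (g : Matrix n n ℤ) i j - (1 : Matrix n n ℤ) i j := by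
  rw [Units.ext_iff, ← Matrix.ext_iff]
  refine forall₂_congr fun i j => ?_
  rw [← ZMod.intCast_zmod_eq_zero_iff_dvd, Int.cast_sub, sub_eq_zero]
  by_cases h : i = j <;> simp [one_apply, h]

theorem exists_pow_not_dvd_sub_one {p : ℕ} (hp : 2 ≤ p) {g : GL n ℤ} (hg : g ≠ 1) :
    ∃ N, 1 ≤ N ∧
      ¬ ∀ i j, (p : ℤ) ^ N ∣ (g : Matrix n n ℤ) i j - (1 : Matrix n n ℤ) i j := by
  obtain ⟨i, j, hij⟩ : ∃ i j, (g : Matrix n n ℤ) i j - (1 : Matrix n n ℤ) i j ≠ 0 := by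
    by_contra! h
    exact hg (Units.ext (Matrix.ext fun i j => sub_eq_zero.mp (h i j)))
  obtain ⟨N, hN, hdvd⟩ := Int.exists_pow_not_dvd hp hij
  exact ⟨N, hN, fun h => hdvd (h i j)⟩

end GeneralLinearGroup

end Matrix

theorem val_stmt7M1 : (stmt7M1 : Matrix (Fin 2) (Fin 2) ℤ) = Matrix.transvection 0 1 2 := by
  decide

theorem val_stmt7M2 : (stmt7M2 : Matrix (Fin 2) (Fin 2) ℤ) = Matrix.transvection 1 0 2 := by
  decide

theorem sanov_injective_lift : Function.Injective (FreeGroup.lift ![stmt7M1, stmt7M2]) := by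
  have hdisj : Disjoint {v : Fin 2 → ℤ | |v 1| < |v 0|} {v | |v 0| < |v 1|} :=
    Set.disjoint_left.mpr fun v (h : |v 1| < |v 0|) (h' : |v 0| < |v 1|) => lt_asymm h h'
  refine FreeGroup.injective_lift_of_zpow_ping_pong _
    ![{v : Fin 2 → ℤ | |v 1| < |v 0|}, {v | |v 0| < |v 1|}] ?_ ?_ ?_
  · intro i
    fin_cases i
    · exact ⟨![1, 0], by simp⟩
    · exact ⟨![0, 1], by simp⟩
  · intro i j hij
    fin_cases i <;> fin_cases j
    all_goals first | exact absurd rfl hij | exact hdisj | exact hdisj.symm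
  · intro i j hij n hn
    fin_cases i <;> fin_cases j
    all_goals first
      | exact absurd rfl hij
      | exact Matrix.GeneralLinearGroup.zpow_smul_subset_of_val_eq_transvection zero_ne_one
          val_stmt7M1 (by norm_num) hn
      | exact Matrix.GeneralLinearGroup.zpow_smul_subset_of_val_eq_transvection one_ne_zero
          val_stmt7M2 (by norm_num) hn

/-- Let `ρ : F_2 → GL(2, ℤ)` be the homomorphism with `ρ(X_1) = [[1,2],[0,1]]`,
`ρ(X_2) = [[1,0],[2,1]]`, and let `p ≥ 2`.  For every `w ≠ 1` in `F_2` there is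
`N ≥ 1` such that the reduction of `ρ(w)` modulo `p^N` is not the identity of
`GL(2, ℤ/p^Nℤ)`; equivalently, the intersection over `N ≥ 1` of the subgroups
`G_N = ρ⁻¹(Γ(2, p^N ℤ))` of `F_2` is trivial. -/
theorem stmt_7 (p : ℕ) (hp : 2 ≤ p) :
    (∀ w : FreeGroup (Fin 2), w ≠ 1 →
      ∃ N : ℕ, 1 ≤ N ∧
        Matrix.GeneralLinearGroup.map (Int.castRingHom (ZMod (p ^ N)))
          (FreeGroup.lift ![stmt7M1, stmt7M2] w) ≠ 1) ∧
    (⋂ (N : ℕ) (_ : 1 ≤ N),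
        {w : FreeGroup (Fin 2) |
          ∀ i j, ((FreeGroup.lift ![stmt7M1, stmt7M2] w : Matrix (Fin 2) (Fin 2) ℤ) i j
            - (1 : Matrix (Fin 2) (Fin 2) ℤ) i j) ∈ Ideal.span {(p : ℤ) ^ N}}
      = {1}) := by
  have not_dvd_of_ne_one (w : FreeGroup (Fin 2)) (hw : w ≠ 1) :=
    Matrix.GeneralLinearGroup.exists_pow_not_dvd_sub_one hp
      (sanov_injective_lift.ne hw |>.trans_eq (map_one _))
  refine ⟨fun w hw => ?_, ?_⟩
  · obtain ⟨N, hN, hdvd⟩ := not_dvd_of_ne_one w hw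
    refine ⟨N, hN, ?_⟩
    rwa [Ne, Matrix.GeneralLinearGroup.map_intCast_eq_one_iff, Nat.cast_pow]
  · ext w
    simp only [Set.mem_iInter, Set.mem_ofPred_eq, Set.mem_singleton_iff,
      Ideal.mem_span_singleton]
    refine ⟨fun h => ?_, ?_⟩
    · by_contra hw
      obtain ⟨N, hN, hdvd⟩ := not_dvd_of_ne_one w hw
      exact hdvd (h N hN)
    · rintro rfl N _ i j
      simp
end

section
/- (Residual finiteness of finitely generated linear groups) Let G be a finitely generated group, F a field, n ≥ 1, and suppose there exists an injective group homomorphism G → GL(n, F). Then G is residually finite: for every g ∈ G with g ≠ 1 there exist a finite group H and a group homomorphism θ : G → H such that θ(g) ≠ 1. -/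
/-!
A finitely generated subgroup of `GL(n, F)` lies in `GL(n, A)`, where `A` is the finitely
generated `ℤ`-algebra spanned by the entries of the generators and of their inverses. Since `ℤ` is
a Jacobson ring, so is `A`, and by Zariski's lemma every residue field `A ⧸ m` at a maximal ideal is
finite. As `A` is reduced, its maximal ideals intersect in `0`; hence a matrix `M ≠ 1` has an entry
of `M - 1` outside some maximal ideal `m`, and `M` survives in the finite group `GL(n, A ⧸ m)`.
-/

open Ideal

theorem IsJacobsonRing.of_dimensionLEOne {R : Type*} [CommRing R] [IsDomain R]
    [Ring.DimensionLEOne R] (h : (⊥ : Ideal R).jacobson = ⊥) : IsJacobsonRing R := by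
  refine isJacobsonRing_iff_prime_eq.mpr fun P hP => ?_
  rcases eq_or_ne P ⊥ with rfl | hP0
  · exact h
  · have := Ring.DimensionLEOne.maximalOfPrime hP0 hP
    exact jacobson_eq_self_of_isMaximal

theorem Int.jacobson_bot : (⊥ : Ideal ℤ).jacobson = ⊥ := by
  refine eq_bot_iff.mpr fun x hx => mem_bot.mpr ?_
  rcases Int.isUnit_iff.mp (mem_jacobson_bot.mp hx x) with h | h
  · exact mul_self_eq_zero.mp (by linarith)
  · nlinarith [mul_self_nonneg x]

instance Int.isJacobsonRing : IsJacobsonRing ℤ :=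
  .of_dimensionLEOne Int.jacobson_bot

theorem Ideal.exists_isMaximal_notMem {R : Type*} [CommRing R] [IsJacobsonRing R]
    [IsReduced R] {a : R} (ha : a ≠ 0) : ∃ m : Ideal R, m.IsMaximal ∧ a ∉ m := by
  have : a ∉ (⊥ : Ideal R).jacobson := by
    rwa [IsJacobsonRing.out' _ isRadical_bot, mem_bot]
  simp only [jacobson, mem_sInf, not_forall] at this
  obtain ⟨m, ⟨-, hm⟩, ham⟩ := this
  exact ⟨m, hm, ham⟩

theorem Field.finite_of_moduleFinite_int (k : Type*) [Field k] [Module.Finite ℤ k] :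
    Finite k := by
  -- `k` is integral over `ℤ`, so an injective `ℤ → k` would make `ℤ` a field.
  have : ¬ Function.Injective (algebraMap ℤ k) := fun h =>
    Int.not_isField (isField_of_isIntegral_of_isField h (Field.toIsField k))
  obtain ⟨p, hp, hp0⟩ : ∃ p : ℤ, (p : k) = 0 ∧ p ≠ 0 := by
    rw [injective_iff_map_eq_zero] at this
    push Not at this
    simpa using this
  exact Module.finite_of_fg_torsion k fun x =>
    ⟨⟨p, mem_nonZeroDivisors_of_ne_zero hp0⟩, by simp [Submonoid.smul_def, zsmul_eq_mul, hp]⟩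

theorem Ideal.finite_quotient_of_finiteType_int {A : Type*} [CommRing A] [Algebra.FiniteType ℤ A]
    (m : Ideal A) [m.IsMaximal] : Finite (A ⧸ m) := by
  let := Quotient.field m
  have := finite_of_finite_type_of_isJacobsonRing ℤ (A ⧸ m)
  exact Field.finite_of_moduleFinite_int (A ⧸ m)

namespace Group.ResiduallyFinite

variable {G G' : Type*} [Group G] [Group G']

theorem of_injective [ResiduallyFinite G'] {f : G →* G'} (hf : Function.Injective f) :
    ResiduallyFinite G := by
  refine residuallyFinite_iff_exists_finiteIndexNormalSubgroup.mpr fun g hg => ?_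
  obtain ⟨N, hgN⟩ := exists_finiteIndexNormalSubgroup_notMem (f g) ((map_ne_one_iff f hf).mpr hg)
  exact ⟨N.comap f, hgN⟩

universe u in
theorem exists_finite_monoidHom_ne_one [ResiduallyFinite G] {g : G} (hg : g ≠ 1) :
    ∃ (H : Type u) (_ : Group H) (_ : Finite H) (θ : G →* H), θ g ≠ 1 := by
  obtain ⟨N, hgN⟩ := exists_finiteIndexNormalSubgroup_notMem g hg
  refine ⟨Shrink.{u} (G ⧸ N.toSubgroup), inferInstance, inferInstance,
    Shrink.mulEquiv.symm.toMonoidHom.comp (QuotientGroup.mk' _), ?_⟩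
  simpa [FiniteIndexNormalSubgroup.mem_toSubgroup_iff] using hgN

end Group.ResiduallyFinite

open Matrix

namespace Matrix.GeneralLinearGroup

variable {n R : Type*} [Fintype n] [DecidableEq n] [CommRing R]

theorem mem_range_map_val {k : Type*} [CommRing k] [Algebra k R] (A : Subalgebra k R)
    (M : GL n R) (hM : ∀ i j, (M : Matrix n n R) i j ∈ A)
    (hM' : ∀ i j, (↑M⁻¹ : Matrix n n R) i j ∈ A) :
    M ∈ (map (A.val : A →+* R)).range := by
  have hinj : Function.Injective ((A.val : A →+* R).mapMatrix : Matrix n n A → Matrix n n R) :=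
    Matrix.map_injective Subtype.val_injective
  let N : Matrix n n A := of fun i j => ⟨_, hM i j⟩
  let N' : Matrix n n A := of fun i j => ⟨_, hM' i j⟩
  have hN : (A.val : A →+* R).mapMatrix N = M := rfl
  have hN' : (A.val : A →+* R).mapMatrix N' = ↑M⁻¹ := rfl
  refine ⟨⟨N, N', hinj ?_, hinj ?_⟩, Units.ext hN⟩
  · rw [map_mul, map_one, hN, hN', M.mul_inv]
  · rw [map_mul, map_one, hN, hN', M.inv_mul]

theorem exists_fg_subalgebra_lift {G : Type*} [Group G] [Group.FG G] (φ : G →* GL n R) :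
    ∃ (A : Subalgebra ℤ R) (ψ : G →* GL n A), A.FG ∧ (map (A.val : A →+* R)).comp ψ = φ := by
  classical
  obtain ⟨S, hS⟩ := Group.FG.out (G := G)
  let entries (M : GL n R) : Finset R :=
    Finset.univ.image (fun p : n × n => (M : Matrix n n R) p.1 p.2) ∪
      Finset.univ.image (fun p : n × n => (↑M⁻¹ : Matrix n n R) p.1 p.2)
  let A := Algebra.adjoin ℤ (↑(S.biUnion fun s => entries (φ s)) : Set R)
  have hrange : φ.range ≤ (map (A.val : A →+* R)).range := by
    rw [φ.range_eq_map, ← hS, MonoidHom.map_closure, Subgroup.closure_le]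
    rintro _ ⟨s, hs, rfl⟩
    refine mem_range_map_val A (φ s) (fun i j => Algebra.subset_adjoin ?_)
      (fun i j => Algebra.subset_adjoin ?_) <;> refine Finset.mem_biUnion.mpr ⟨s, hs, ?_⟩
    · exact Finset.mem_union_left _ (Finset.mem_image_of_mem _ (Finset.mem_univ (i, j)))
    · exact Finset.mem_union_right _ (Finset.mem_image_of_mem _ (Finset.mem_univ (i, j)))
  have hmap : Function.Injective (map (n := n) (A.val : A →+* R)) := fun N N' h =>
    Units.ext (Matrix.map_injective Subtype.val_injective (congrArg Units.val h))
  refine ⟨A, (MonoidHom.ofInjective hmap).symm.toMonoidHom.comp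
    ((Subgroup.inclusion hrange).comp φ.rangeRestrict), ⟨_, rfl⟩, ?_⟩
  ext1 g
  exact MonoidHom.apply_ofInjective_symm hmap _

instance residuallyFinite (A : Type*) [CommRing A] [IsReduced A] [Algebra.FiniteType ℤ A] :
    Group.ResiduallyFinite (GL n A) := by
  refine Group.residuallyFinite_iff_exists_finiteIndex.mpr fun M hM => ?_
  obtain ⟨i, j, hij⟩ : ∃ i j, ((M : Matrix n n A) - 1) i j ≠ 0 := by
    by_contra! h
    exact hM (Units.ext (sub_eq_zero.mp (Matrix.ext h)))
  have := isJacobsonRing_of_finiteType (A := ℤ) (B := A)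
  obtain ⟨m, hm, hijm⟩ := exists_isMaximal_notMem hij
  have := finite_quotient_of_finiteType_int m
  refine ⟨(map (n := n) (Ideal.Quotient.mk m)).ker, inferInstance, fun hMker => hijm ?_⟩
  have : (Ideal.Quotient.mk m).mapMatrix ((M : Matrix n n A) - 1) = 0 := by
    rw [map_sub, map_one, sub_eq_zero]
    exact congrArg Units.val hMker
  exact Ideal.Quotient.eq_zero_iff_mem.mp (congrFun (congrFun this i) j)

end Matrix.GeneralLinearGroup

theorem stmt_8_general (G : Type*) [Group G] [Group.FG G] (F : Type*) [Field F] (n : ℕ)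
    (hinj : ∃ φ : G →* Matrix.GeneralLinearGroup (Fin n) F, Function.Injective φ) :
    ∀ g : G, g ≠ 1 →
      ∃ (H : Type) (_ : Group H) (_ : Finite H) (θ : G →* H), θ g ≠ 1 := by
  obtain ⟨φ, hφ⟩ := hinj
  obtain ⟨A, ψ, hA, rfl⟩ := Matrix.GeneralLinearGroup.exists_fg_subalgebra_lift φ
  have : Algebra.FiniteType ℤ A := (Subalgebra.fg_iff_finiteType A).mp hA
  rw [MonoidHom.coe_comp] at hφ
  have := Group.ResiduallyFinite.of_injective hφ.of_comp
  exact fun g hg => Group.ResiduallyFinite.exists_finite_monoidHom_ne_one hg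

/-- (Residual finiteness of finitely generated linear groups) If a finitely
generated group `G` admits an injective homomorphism into `GL(n, F)` for a field
`F` and `n ≥ 1`, then `G` is residually finite: for every `g ≠ 1` there are a
finite group `H` and a homomorphism `θ : G → H` with `θ(g) ≠ 1`. -/
theorem stmt_8 (G : Type*) [Group G] [Group.FG G] (F : Type*) [Field F] (n : ℕ)
    (hn : 1 ≤ n)
    (hinj : ∃ φ : G →* Matrix.GeneralLinearGroup (Fin n) F, Function.Injective φ) :
    ∀ g : G, g ≠ 1 →
      ∃ (H : Type) (_ : Group H) (_ : Finite H) (θ : G →* H), θ g ≠ 1 :=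
  stmt_8_general G F n hinj
end

section
/- Let G be a group and (G_N)_{N ∈ ℕ} a decreasing sequence of normal subgroups of G (G_{N+1} ≤ G_N) with ⋂_N G_N = {1}. Let φ_N : ℂG → ℂ[G/G_N] be the algebra homomorphism induced by the quotient map G → G/G_N. Then for every h ∈ ℂG and every n ∈ ℕ there exists N_0 such that for all N ≥ N_0, the coefficient of the identity in φ_N(h)^n (in ℂ[G/G_N]) equals the coefficient of the identity in h^n (in ℂG); i.e. the finite quotient approximations reproduce the moments 𝒯(h^n) exactly for sufficiently large N. -/
/-! `h ^ n` has finite support, and since the `G_N` decrease to `{1}`, for large `N` no element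
of that support other than `1` lies in `G_N`. Then the fibre over `1` of `G → G ⧸ G_N` meets the
support only in `1`, so pushing forward along the quotient map does not change the coefficient
of the identity; and pushing forward is a ring homomorphism, so it commutes with the power. -/

open Filter

theorem Finsupp.mapDomain_apply_of_fiber_subset {α β M : Type*} [AddCommMonoid M] {f : α → β}
    (x : α →₀ M) {a : α} (hfib : ∀ i ∈ x.support, f i = f a → i = a) :
    x.mapDomain f (f a) = x a := by
  classical
  rw [mapDomain_apply_eq_sum, Finset.sum_subset (s₂ := {a}), Finset.sum_singleton]
  · intro i hi
    rw [Finset.mem_filter] at hi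
    exact Finset.mem_singleton.mpr (hfib i hi.1 hi.2)
  · intro i hi hiFiber
    rw [Finset.mem_singleton] at hi
    subst hi
    simpa using hiFiber

theorem MonoidAlgebra.coeff_mapDomainRingHom_one {k G H : Type*} [Semiring k] [Monoid G]
    [Monoid H] (f : G →* H) (x : MonoidAlgebra k G)
    (hker : ∀ g ∈ x.coeff.support, f g = 1 → g = 1) :
    (mapDomainRingHom k f x).coeff 1 = x.coeff 1 := by
  simpa using Finsupp.mapDomain_apply_of_fiber_subset x.coeff (f := f) (a := 1) (by simpa using hker)

theorem Subgroup.eventually_forall_mem_eq_one {G ι : Type*} [Group G] [Preorder ι]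
    {Gs : ι → Subgroup G} (hanti : Antitone Gs) (hint : ⨅ i, Gs i = ⊥) (s : Finset G) :
    ∀ᶠ i in atTop, ∀ g ∈ s, g ∈ Gs i → g = 1 := by
  refine (eventually_all_finset s).mpr fun g _ => ?_
  by_cases hg : g = 1
  · exact .of_forall fun _ _ => hg
  obtain ⟨i₀, hi₀⟩ : ∃ i₀, g ∉ Gs i₀ := by
    by_contra! hall
    exact hg (by simpa [hint] using Subgroup.mem_iInf.mpr hall)
  exact (eventually_ge_atTop i₀).mono fun i hi hgi => (hi₀ (hanti hi hgi)).elim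

theorem MonoidAlgebra.eventually_coeff_mapDomainRingHom_mk'_one {k G ι : Type*} [Semiring k]
    [Group G] [Preorder ι] {Gs : ι → Subgroup G} [∀ i, (Gs i).Normal] (hanti : Antitone Gs)
    (hint : ⨅ i, Gs i = ⊥) (x : MonoidAlgebra k G) :
    ∀ᶠ i in atTop, (mapDomainRingHom k (QuotientGroup.mk' (Gs i)) x).coeff 1 = x.coeff 1 :=
  (Subgroup.eventually_forall_mem_eq_one hanti hint x.coeff.support).mono fun _ hi =>
    coeff_mapDomainRingHom_one _ x fun g hg hg1 => hi g hg ((QuotientGroup.eq_one_iff g).mp hg1)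

/-- Let `(G_N)` be a decreasing sequence of normal subgroups of `G` with trivial
intersection, and let `φ_N : ℂG → ℂ[G/G_N]` be induced by the quotient maps.  For
every `h ∈ ℂG` and `n ∈ ℕ` there is `N₀` such that for all `N ≥ N₀` the coefficient
of the identity in `φ_N(h)^n` equals the coefficient of the identity in `h^n`:
the finite quotients reproduce the moments `𝒯(h^n)` exactly for large `N`. -/
theorem stmt_11 {G : Type*} [Group G] (Gs : ℕ → Subgroup G)
    (hnorm : ∀ N, (Gs N).Normal)
    (hdec : ∀ N, Gs (N + 1) ≤ Gs N)
    (hint : ⨅ N, Gs N = ⊥)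
    (h : MonoidAlgebra ℂ G) (n : ℕ) :
    ∃ N₀ : ℕ, ∀ N ≥ N₀,
      (letI := hnorm N;
        ((MonoidAlgebra.mapDomainRingHom ℂ (QuotientGroup.mk' (Gs N)) h) ^ n).coeff
          (1 : G ⧸ Gs N))
        = (h ^ n).coeff (1 : G) := by
  have := hnorm
  obtain ⟨N₀, hN₀⟩ := eventually_atTop.mp <|
    MonoidAlgebra.eventually_coeff_mapDomainRingHom_mk'_one (antitone_nat_of_succ_le hdec) hint
      (h ^ n)
  refine ⟨N₀, fun N hN => ?_⟩
  rw [← map_pow]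
  exact hN₀ N hN
end

section
/- (McKay) Let m ≥ 1, let F_m be the free group on m generators, let S be the symmetric set of the m generators and their inverses, and set v = 2m. Let N_e(n) be the number of n-tuples (s_1, …, s_n) ∈ S^n with s_1 ⋯ s_n = 1. Then N_e(n) = 0 for n odd, and for n even with n ≥ 2, n · N_e(n) = v · Σ_{k=0}^{n/2} C(n, k) · (n − 2k) · (v − 1)^k; equivalently N_e(n) = v Σ_{k=0}^{n/2} C(n,k) ((n−2k)/n) (v−1)^k. -/
/-!
The Cayley graph of `F_m` with respect to `S` is the `2m`-regular tree, so the number of walks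
of length `n` from `1` to `g` is a function `B(n, d)` of the distance `d = |g|` alone: from `1`
all `2m` neighbours are one step further away, from any other vertex one neighbour is closer
and `q = 2m - 1` are further. This recursion is solved by
`B(d + 2j, d) = Σ_{k ≤ j} (C(n, k) - C(n, k - 1)) q^k`, the ballot differences obeying Pascal's
rule. At `d = 0` the identity `n (C(n, k) - C(n, k - 1)) = T_k + T_{k - 1}` with
`T_k = C(n, k) (n - 2k)` turns `n B(n, 0)` into `(q + 1) Σ_k T_k q^k`.
-/

namespace McKay

open Finset

lemma sum_range_succ_mul_pow {R : Type*} [CommSemiring R] (q : R) {a b : ℕ → R}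
    (h₀ : a 0 = b 0) (hs : ∀ k, a (k + 1) = b (k + 1) + b k) (K : ℕ) :
    ∑ k ∈ range (K + 1), a k * q ^ k =
      ∑ k ∈ range (K + 1), b k * q ^ k + q * ∑ k ∈ range K, b k * q ^ k := by
  induction K with
  | zero => simp [h₀]
  | succ K ih =>
    rw [sum_range_succ, ih, hs, sum_range_succ _ (K + 1), sum_range_succ _ K]
    ring

def ballot (n : ℕ) : ℕ → ℤ
  | 0 => 1
  | k + 1 => n.choose (k + 1) - n.choose k

lemma ballot_succ_succ (n k : ℕ) : ballot (n + 1) (k + 1) = ballot n (k + 1) + ballot n k := by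
  cases k with
  | zero => simp [ballot]
  | succ k => simp only [ballot, Nat.choose_succ_succ]; push_cast; ring

lemma ballot_middle (j : ℕ) : ballot (2 * j + 1) (j + 1) = 0 := by
  rw [ballot, Nat.choose_symm_half, sub_self]

lemma mul_ballot_succ (n k : ℕ) :
    n * ballot n (k + 1) =
      n.choose (k + 1) * (n - 2 * (k + 1) : ℤ) + n.choose k * (n - 2 * k : ℤ) := by
  have hchoose : (n.choose (k + 1) * (k + 1) : ℤ) = n.choose k * (n - k : ℤ) := by
    rcases le_or_gt k n with hk | hk
    · have h := congrArg (Nat.cast (R := ℤ)) (Nat.choose_succ_right_eq n k)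
      push_cast [Nat.cast_sub hk] at h
      exact h
    · simp [Nat.choose_eq_zero_of_lt hk,
        Nat.choose_eq_zero_of_lt (hk.trans (Nat.lt_succ_self k))]
  rw [ballot]
  linear_combination 2 * hchoose

-- The number of walks of length `n` between two vertices at distance `d` in the
-- `(q + 1)`-regular tree.
def treeWalk (q : ℤ) : ℕ → ℕ → ℤ
  | 0, 0 => 1
  | 0, _ + 1 => 0
  | n + 1, 0 => (q + 1) * treeWalk q n 1
  | n + 1, d + 1 => treeWalk q n d + q * treeWalk q n (d + 2)

lemma treeWalk_eq_zero (q : ℤ) {n d : ℕ} (h : ∀ j, n ≠ d + 2 * j) : treeWalk q n d = 0 := by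
  induction n generalizing d with
  | zero =>
    cases d with
    | zero => exact absurd rfl (h 0)
    | succ d => rfl
  | succ n ih =>
    cases d with
    | zero => rw [treeWalk, ih fun j hj => h (j + 1) (by omega), mul_zero]
    | succ d =>
      rw [treeWalk, ih fun j hj => h j (by omega), ih fun j hj => h (j + 1) (by omega)]
      ring

lemma treeWalk_add_two_mul (q : ℤ) (d j : ℕ) :
    treeWalk q (d + 2 * j) d = ∑ k ∈ range (j + 1), ballot (d + 2 * j) k * q ^ k := by
  induction hn : d + 2 * j generalizing d j with
  | zero =>
    obtain ⟨rfl, rfl⟩ : d = 0 ∧ j = 0 := by omega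
    simp [treeWalk, ballot]
  | succ n ih =>
    have pascal := sum_range_succ_mul_pow q (a := ballot (n + 1)) (b := ballot n) rfl
      (ballot_succ_succ n)
    cases d with
    | zero =>
      obtain ⟨i, rfl⟩ : ∃ i, j = i + 1 := ⟨j - 1, by omega⟩
      obtain rfl : n = 1 + 2 * i := by omega
      rw [treeWalk, ih 1 i rfl, pascal, sum_range_succ _ (i + 1),
        show 1 + 2 * i = 2 * i + 1 by omega, ballot_middle]
      ring
    | succ d =>
      rw [treeWalk, ih d j (by omega), pascal]
      cases j with
      | zero => simp [treeWalk_eq_zero q (n := n) (d := d + 2) (fun j => by omega)]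
      | succ i => rw [ih (d + 2) i (by omega)]

lemma two_mul_treeWalk_two_mul_zero (q : ℤ) (j : ℕ) :
    (2 * j : ℤ) * treeWalk q (2 * j) 0 =
      (q + 1) * ∑ k ∈ range (j + 1), ((2 * j).choose k : ℤ) * (2 * j - 2 * k) * q ^ k := by
  have hsum := sum_range_succ_mul_pow q (K := j)
    (a := fun k => ((2 * j : ℕ) : ℤ) * ballot (2 * j) k)
    (b := fun k => ((2 * j).choose k : ℤ) * ((2 * j : ℕ) - 2 * k)) (by simp [ballot])
    (fun k => mul_ballot_succ (2 * j) k)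
  have htop : ((2 * j).choose j : ℤ) * ((2 * j : ℕ) - 2 * j) * q ^ j = 0 := by push_cast; ring
  rw [← zero_add (2 * j), treeWalk_add_two_mul, zero_add, mul_sum]
  simp only [← mul_assoc] at hsum ⊢
  push_cast at hsum htop ⊢
  rw [hsum, sum_range_succ _ j, htop]
  ring

end McKay

namespace FreeGroup

open Finset

variable {α : Type*}

lemma prod_ofFn_mk_singleton {n : ℕ} (u : Fin n → α × Bool) :
    (List.ofFn fun i => mk [u i]).prod = mk (List.ofFn u) := by
  induction n with
  | zero => simp [← one_eq_mk]
  | succ n ih =>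
    rw [List.ofFn_succ, List.prod_cons, ih, List.ofFn_succ, mul_mk, List.singleton_append]

lemma range_mk_singleton :
    Set.range (fun x : α × Bool => mk [x]) = Set.range of ∪ Set.range fun a => (of a)⁻¹ := by
  ext g
  simp only [Set.mem_range, Set.mem_union, Prod.exists, Bool.exists_bool, inv_mk, invRev,
    List.map_cons, List.map_nil, List.reverse_cons, List.reverse_nil, List.nil_append, of]
  simp [exists_or, or_comm]

-- The letter `(a, b)` stands for `of a` if `b` and for `(of a)⁻¹` otherwise, so this counts
-- the walks of length `n` from `1` to `g` in the Cayley graph.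
variable (α) in
noncomputable def numWalks (n : ℕ) (g : FreeGroup α) : ℕ :=
  Nat.card {u : Fin n → α × Bool // mk (List.ofFn u) = g}

lemma numWalks_succ [Fintype α] (n : ℕ) (g : FreeGroup α) :
    numWalks α (n + 1) g = ∑ x, numWalks α n ((mk [x])⁻¹ * g) := by
  let e : {u : Fin (n + 1) → α × Bool // mk (List.ofFn u) = g} ≃
      Σ x, {u : Fin n → α × Bool // mk (List.ofFn u) = (mk [x])⁻¹ * g} :=
    ((Fin.consEquiv fun _ => α × Bool).subtypeEquiv
        (p := fun p => mk (List.ofFn (Fin.cons p.1 p.2)) = g) fun _ => Iff.rfl).symm.trans <|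
      (Equiv.subtypeProdEquivSigmaSubtype fun x u => mk (List.ofFn (Fin.cons x u)) = g).trans <|
        Equiv.sigmaCongrRight fun x => Equiv.subtypeEquivRight fun u => by
          rw [List.ofFn_cons, ← List.singleton_append, ← mul_mk, eq_inv_mul_iff_mul_eq]
  rw [numWalks, Nat.card_congr e, Nat.card_sigma]
  rfl

variable [DecidableEq α]

lemma numWalks_zero (g : FreeGroup α) : numWalks α 0 g = if g = 1 then 1 else 0 := by
  by_cases hg : g = 1 <;> simp [numWalks, hg, ← one_eq_mk, eq_comm]

lemma mk_singleton_injective : Function.Injective (fun x : α × Bool => mk [x]) := fun x y h => by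
  simpa [reduce_singleton] using congrArg toWord h

lemma norm_inv_mk_singleton_mul (x : α × Bool) (g : FreeGroup α) :
    ((mk [x])⁻¹ * g).norm = if g.toWord.head? = some x then g.norm - 1 else g.norm + 1 := by
  rw [inv_mk, norm, norm, toWord_mul, toWord_mk, show invRev [x] = [(x.1, !x.2)] from rfl,
    reduce_singleton, List.singleton_append, reduce.cons, reduce_toWord]
  rcases g.toWord with _ | ⟨y, w⟩
  · simp
  · by_cases h : y = x
    · simp [h]
    · have h' : ¬(x.1 = y.1 ∧ x.2 = y.2) := fun hxy => h (Prod.ext hxy.1 hxy.2).symm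
      simp [h, h']

lemma sum_norm_inv_mk_singleton_mul [Fintype α] (f : ℕ → ℤ) (g : FreeGroup α) :
    ∑ x, f ((mk [x])⁻¹ * g).norm =
      if g = 1 then 2 * Fintype.card α * f 1
      else f (g.norm - 1) + (2 * Fintype.card α - 1) * f (g.norm + 1) := by
  simp only [norm_inv_mk_singleton_mul]
  simp only [← toWord_eq_nil_iff, FreeGroup.norm]
  rcases g.toWord with _ | ⟨y, w⟩
  · simp [Fintype.card_prod, mul_comm]
  · rw [← add_sum_erase _ _ (mem_univ y)]
    rw [sum_congr rfl fun x hx => by rw [if_neg (by simpa [eq_comm] using ne_of_mem_erase hx)]]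
    have : 1 ≤ Fintype.card (α × Bool) := Fintype.card_pos_iff.mpr ⟨y⟩
    simp only [List.head?_cons, if_true, List.length_cons, Nat.add_sub_cancel, ite_false,
      sum_const, card_erase_of_mem (mem_univ y), card_univ, nsmul_eq_mul, Nat.cast_sub this,
      List.cons_ne_nil]
    simp only [Fintype.card_prod, Fintype.card_bool]
    push_cast
    ring

lemma card_tuples_prod_eq (n : ℕ) (g : FreeGroup α) :
    Nat.card {t : Fin n → FreeGroup α //
      (∀ i, t i ∈ Set.range (of : α → FreeGroup α) ∪ Set.range fun a => (of a)⁻¹) ∧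
        (List.ofFn t).prod = g} = numWalks α n g := by
  refine (Nat.card_eq_of_bijective
    (fun u => ⟨fun i => mk [u.1 i], fun i => range_mk_singleton ▸ ⟨u.1 i, rfl⟩,
      (prod_ofFn_mk_singleton u.1).trans u.2⟩) ⟨fun u v h => ?_, fun t => ?_⟩).symm
  · exact Subtype.ext <| funext fun i =>
      mk_singleton_injective (congrFun (congrArg Subtype.val h) i)
  · obtain ⟨t, ht, hprod⟩ := t
    rw [← range_mk_singleton] at ht
    choose u hu using ht
    obtain rfl : (fun i => mk [u i]) = t := funext hu
    exact ⟨⟨u, (prod_ofFn_mk_singleton u).symm.trans hprod⟩, rfl⟩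

end FreeGroup

namespace McKay

open FreeGroup

lemma numWalks_eq_treeWalk {α : Type*} [DecidableEq α] [Fintype α] (n : ℕ) (g : FreeGroup α) :
    (numWalks α n g : ℤ) = treeWalk (2 * Fintype.card α - 1) n g.norm := by
  induction n generalizing g with
  | zero =>
    rw [numWalks_zero]
    rcases hg : g.norm with _ | d
    · simp [FreeGroup.norm_eq_zero.mp hg, treeWalk]
    · have : g ≠ 1 := fun h => by simp [h] at hg
      simp [this, treeWalk]
  | succ n ih =>
    rw [numWalks_succ, Nat.cast_sum]
    simp only [ih, sum_norm_inv_mk_singleton_mul]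
    rcases hg : g.norm with _ | d
    · simp [FreeGroup.norm_eq_zero.mp hg, treeWalk]
    · have : g ≠ 1 := fun h => by simp [h] at hg
      simp [this, treeWalk]

end McKay

/-- (McKay) Let `F_m` be the free group on `m ≥ 1` generators, `S` the symmetric set
of the generators and their inverses, `v = 2m`, and `N_e(n)` the number of `n`-tuples
from `S` with product `1`.  Then `N_e(n) = 0` for odd `n`, and for even `n ≥ 2`,
`n · N_e(n) = v · Σ_{k=0}^{n/2} C(n,k) (n−2k) (v−1)^k`. -/
theorem stmt_14 (m : ℕ) (hm : 1 ≤ m) (n : ℕ) :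
    (Odd n →
      Nat.card {t : Fin n → FreeGroup (Fin m) //
        (∀ i, t i ∈ Set.range (FreeGroup.of : Fin m → FreeGroup (Fin m)) ∪
          Set.range fun i : Fin m => (FreeGroup.of i)⁻¹) ∧
        (List.ofFn t).prod = 1} = 0) ∧
    (Even n → 2 ≤ n →
      n * Nat.card {t : Fin n → FreeGroup (Fin m) //
        (∀ i, t i ∈ Set.range (FreeGroup.of : Fin m → FreeGroup (Fin m)) ∪
          Set.range fun i : Fin m => (FreeGroup.of i)⁻¹) ∧
        (List.ofFn t).prod = 1}
      = 2 * m * ∑ k ∈ Finset.range (n / 2 + 1),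
          n.choose k * (n - 2 * k) * (2 * m - 1) ^ k) := by
  simp only [FreeGroup.card_tuples_prod_eq]
  have hwalks : (FreeGroup.numWalks (Fin m) n 1 : ℤ) = McKay.treeWalk (2 * m - 1) n 0 := by
    simpa using McKay.numWalks_eq_treeWalk n (1 : FreeGroup (Fin m))
  refine ⟨fun ⟨i, hi⟩ => ?_, fun heven _ => ?_⟩
  · exact_mod_cast hwalks.trans (McKay.treeWalk_eq_zero _ fun j => by omega)
  · obtain ⟨j, rfl⟩ := heven.two_dvd
    apply Nat.cast_injective (R := ℤ)
    rw [Nat.mul_div_cancel_left j two_pos]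
    push_cast [hwalks]
    rw [McKay.two_mul_treeWalk_two_mul_zero, sub_add_cancel]
    congr 1
    refine Finset.sum_congr rfl fun k hk => ?_
    have hk : 2 * k ≤ 2 * j := by simp only [Finset.mem_range] at hk; omega
    push_cast [Nat.cast_sub hk, Nat.cast_sub (show 1 ≤ 2 * m by omega)]
    rfl
end

section
/- (McKay) Let m ≥ 1, let F_m be the free group on m generators with symmetric generating set S of cardinality v = 2m, and let s ∈ S be one of the generators or inverse generators. Let N_s(n) be the number of n-tuples from S with product s^{−1} and N_e(n) the number of n-tuples from S with product 1. Then N_s(n) = 0 for n even, and v · N_s(n) = N_e(n + 1) for n odd. -/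
/-!
The sign character `F_m → ℤˣ` sending every generator to `-1` takes the value `(-1)^n` on a
product of `n` letters of `S`, so such a product lies in `S` only for odd `n`. A word of length
`n + 1` with product `1` is a letter `a ∈ S` followed by a word of length `n` with product
`a⁻¹`; the automorphisms of `F_m` permuting the generators and inverting some of them preserve
`S` and act transitively on it, so the number of these words does not depend on `a`.
-/

open FreeGroup

section Words

variable {G : Type*} [Group G]

abbrev wordsWithProd (S : Set G) (n : ℕ) (g : G) : Type _ :=
  {t : Fin n → G // (∀ i, t i ∈ S) ∧ (List.ofFn t).prod = g}

theorem map_prod_ofFn_eq_pow {M : Type*} [Monoid M] {S : Set G} (f : G →* M) {c : M}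
    (hf : ∀ x ∈ S, f x = c) {n : ℕ} {t : Fin n → G} (ht : ∀ i, t i ∈ S) :
    f (List.ofFn t).prod = c ^ n := by
  rw [map_list_prod, List.prod_eq_pow_card _ c, List.length_map, List.length_ofFn]
  simp only [List.mem_map, List.mem_ofFn]
  rintro _ ⟨_, ⟨i, rfl⟩, rfl⟩
  exact hf _ (ht i)

instance {S : Set G} [Finite S] {n : ℕ} {g : G} : Finite (wordsWithProd S n g) :=
  Finite.of_injective (fun t i => (⟨t.1 i, t.2.1 i⟩ : S)) fun _ _ h =>
    Subtype.ext <| funext fun i => congrArg Subtype.val (congrFun h i)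

theorem card_wordsWithProd_map {S : Set G} (φ : G ≃* G) (hφ : ∀ x ∈ S, φ x ∈ S)
    (hφ' : ∀ x ∈ S, φ.symm x ∈ S) (n : ℕ) (g : G) :
    Nat.card (wordsWithProd S n (φ g)) = Nat.card (wordsWithProd S n g) := by
  refine Nat.card_congr (Equiv.subtypeEquiv (Equiv.piCongrRight fun _ => φ.symm.toEquiv) ?_)
  intro t
  simp only [Equiv.piCongrRight_apply, MulEquiv.toEquiv_eq_coe, MulEquiv.coe_toEquiv]
  refine and_congr ⟨fun ht i => hφ' _ (ht i), fun ht i => ?_⟩ ?_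
  · simpa using hφ _ (ht i)
  · have hprod : (List.ofFn fun i => φ.symm (t i)).prod = φ.symm (List.ofFn t).prod := by
      rw [map_list_prod, List.map_ofFn]; rfl
    exact (hprod ▸ φ.symm_apply_eq).symm

def wordsWithProdSuccOneEquiv (S : Set G) (n : ℕ) :
    wordsWithProd S (n + 1) 1 ≃ Σ a : S, wordsWithProd S n (a : G)⁻¹ where
  toFun t := ⟨⟨t.1 0, t.2.1 0⟩, Fin.tail t.1, fun i => t.2.1 i.succ, by
    have h := t.2.2
    rw [List.ofFn_succ, List.prod_cons] at h
    exact eq_inv_of_mul_eq_one_right h⟩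
  invFun p := ⟨Fin.cons p.1 p.2.1, Fin.cases p.1.2 p.2.2.1, by
    rw [List.ofFn_succ, List.prod_cons]
    simp [p.2.2.2]⟩
  left_inv t := Subtype.ext (Fin.cons_self_tail t.1)
  right_inv _ := rfl

theorem card_wordsWithProd_succ_one {S : Set G} [Finite S] {n c : ℕ}
    (hc : ∀ a ∈ S, Nat.card (wordsWithProd S n a⁻¹) = c) :
    Nat.card (wordsWithProd S (n + 1) 1) = Nat.card S * c := by
  have := Fintype.ofFinite S
  rw [Nat.card_congr (wordsWithProdSuccOneEquiv S n), Nat.card_sigma,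
    Finset.sum_congr rfl fun a _ => hc a.1 a.2, Finset.sum_const, smul_eq_mul,
    Finset.card_univ, Nat.card_eq_fintype_card]

end Words

namespace FreeGroup

variable {α : Type*}

def symmGens (α : Type*) : Set (FreeGroup α) :=
  Set.range of ∪ Set.range fun i => (of i)⁻¹

theorem of_mem_symmGens (i : α) : of i ∈ symmGens α := Or.inl ⟨i, rfl⟩

theorem inv_of_mem_symmGens (i : α) : (of i)⁻¹ ∈ symmGens α := Or.inr ⟨i, rfl⟩

theorem inv_mem_symmGens {x : FreeGroup α} (hx : x ∈ symmGens α) : x⁻¹ ∈ symmGens α := by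
  rcases hx with ⟨i, rfl⟩ | ⟨i, rfl⟩
  · exact inv_of_mem_symmGens i
  · simpa using of_mem_symmGens i

theorem map_mem_symmGens {β : Type*} (f : FreeGroup α →* FreeGroup β)
    (hf : ∀ i, f (of i) ∈ symmGens β) {x : FreeGroup α} (hx : x ∈ symmGens α) :
    f x ∈ symmGens β := by
  rcases hx with ⟨i, rfl⟩ | ⟨i, rfl⟩
  · exact hf i
  · simpa using inv_mem_symmGens (hf i)

instance [Finite α] : Finite (symmGens α) :=
  ((Set.finite_range _).union (Set.finite_range _)).to_subtype

theorem of_ne_inv_of (i j : α) : (of i : FreeGroup α) ≠ (of j)⁻¹ := by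
  classical
  intro h
  simpa [toWord_of, toWord_inv, invRev] using congrArg toWord h

theorem card_symmGens [Finite α] : Nat.card (symmGens α) = 2 * Nat.card α := by
  have hinv : Function.Injective fun i : α => (of i)⁻¹ := fun i j h =>
    of_injective (inv_injective h)
  have hdisj : Disjoint (Set.range (of : α → FreeGroup α)) (Set.range fun i => (of i)⁻¹) :=
    Set.disjoint_left.2 fun _ ⟨i, hi⟩ ⟨j, hj⟩ => of_ne_inv_of i j (hi.trans hj.symm)
  rw [symmGens, Nat.card_coe_set_eq, Set.ncard_union_eq hdisj (Set.finite_range _)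
    (Set.finite_range _), Set.ncard_range_of_injective of_injective,
    Set.ncard_range_of_injective hinv, two_mul]

theorem lift_neg_one_of_mem_symmGens {x : FreeGroup α} (hx : x ∈ symmGens α) :
    lift (fun _ => (-1 : ℤˣ)) x = -1 := by
  rcases hx with ⟨i, rfl⟩ | ⟨i, rfl⟩ <;> simp

theorem card_wordsWithProd_of_even {n : ℕ} (hn : Even n) {a : FreeGroup α}
    (ha : a ∈ symmGens α) : Nat.card (wordsWithProd (symmGens α) n a) = 0 := by
  refine Nat.card_eq_zero.2 (Or.inl ⟨fun t => ?_⟩)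
  have h := map_prod_ofFn_eq_pow _ (fun _ => lift_neg_one_of_mem_symmGens) t.2.1
  rw [t.2.2, lift_neg_one_of_mem_symmGens ha, hn.neg_one_pow] at h
  exact absurd h (by decide)

theorem card_wordsWithProd_map_of_forall_of (φ : FreeGroup α ≃* FreeGroup α)
    (hφ : ∀ i, φ (of i) ∈ symmGens α) (hφ' : ∀ i, φ.symm (of i) ∈ symmGens α) (n : ℕ)
    (g : FreeGroup α) :
    Nat.card (wordsWithProd (symmGens α) n (φ g)) = Nat.card (wordsWithProd (symmGens α) n g) :=
  card_wordsWithProd_map φ (fun _ => map_mem_symmGens φ.toMonoidHom hφ)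
    (fun _ => map_mem_symmGens φ.symm.toMonoidHom hφ') n g

variable [DecidableEq α]

def invertOfHom (i : α) : FreeGroup α →* FreeGroup α :=
  lift fun j => if j = i then (of j)⁻¹ else of j

theorem invertOfHom_of (i j : α) :
    invertOfHom i (of j) = if j = i then (of j)⁻¹ else of j :=
  lift_apply_of

theorem invertOfHom_comp_self (i : α) :
    (invertOfHom i).comp (invertOfHom i) = MonoidHom.id _ :=
  ext_hom _ _ fun j => by by_cases h : j = i <;> simp [invertOfHom_of, h]

def invertOf (i : α) : FreeGroup α ≃* FreeGroup α :=
  (invertOfHom i).toMulEquiv (invertOfHom i) (invertOfHom_comp_self i) (invertOfHom_comp_self i)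

theorem invertOf_of_mem_symmGens (i j : α) : invertOf i (of j) ∈ symmGens α := by
  change invertOfHom i (of j) ∈ _
  rw [invertOfHom_of]
  split_ifs
  exacts [inv_of_mem_symmGens j, of_mem_symmGens j]

theorem card_wordsWithProd_inv_of (n : ℕ) (i : α) :
    Nat.card (wordsWithProd (symmGens α) n (of i)⁻¹) =
      Nat.card (wordsWithProd (symmGens α) n (of i)) := by
  have h : invertOf i (of i) = (of i)⁻¹ := by
    change invertOfHom i (of i) = _
    simp [invertOfHom_of]
  rw [← h]
  exact card_wordsWithProd_map_of_forall_of _ (invertOf_of_mem_symmGens i)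
    (invertOf_of_mem_symmGens i) n _

theorem card_wordsWithProd_of_eq (n : ℕ) (i j : α) :
    Nat.card (wordsWithProd (symmGens α) n (of i)) =
      Nat.card (wordsWithProd (symmGens α) n (of j)) := by
  have h : freeGroupCongr (Equiv.swap j i) (of j) = of i := by
    simp [freeGroupCongr_apply]
  rw [← h]
  refine card_wordsWithProd_map_of_forall_of _ (fun _ => ?_) (fun _ => ?_) n _ <;>
    simpa [freeGroupCongr_apply] using of_mem_symmGens _

theorem card_wordsWithProd_eq_of_mem (n : ℕ) {a b : FreeGroup α} (ha : a ∈ symmGens α)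
    (hb : b ∈ symmGens α) :
    Nat.card (wordsWithProd (symmGens α) n a) = Nat.card (wordsWithProd (symmGens α) n b) := by
  have card_eq_of : ∀ a ∈ symmGens α, ∀ i, Nat.card (wordsWithProd (symmGens α) n a) =
      Nat.card (wordsWithProd (symmGens α) n (of i)) := by
    rintro _ (⟨j, rfl⟩ | ⟨j, rfl⟩) i
    · exact card_wordsWithProd_of_eq n j i
    · rw [card_wordsWithProd_inv_of, card_wordsWithProd_of_eq n j i]
  obtain ⟨i, rfl⟩ | ⟨i, rfl⟩ := hb
  · exact card_eq_of a ha i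
  · rw [card_wordsWithProd_inv_of]; exact card_eq_of a ha i

end FreeGroup

theorem stmt_15_general (m : ℕ) (s : FreeGroup (Fin m))
    (hs : s ∈ Set.range (FreeGroup.of : Fin m → FreeGroup (Fin m)) ∪
      Set.range fun i : Fin m => (FreeGroup.of i)⁻¹) (n : ℕ) :
    (Even n →
      Nat.card {t : Fin n → FreeGroup (Fin m) //
        (∀ i, t i ∈ Set.range (FreeGroup.of : Fin m → FreeGroup (Fin m)) ∪
          Set.range fun i : Fin m => (FreeGroup.of i)⁻¹) ∧
        (List.ofFn t).prod = s⁻¹} = 0) ∧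
    (Odd n →
      2 * m * Nat.card {t : Fin n → FreeGroup (Fin m) //
        (∀ i, t i ∈ Set.range (FreeGroup.of : Fin m → FreeGroup (Fin m)) ∪
          Set.range fun i : Fin m => (FreeGroup.of i)⁻¹) ∧
        (List.ofFn t).prod = s⁻¹}
      = Nat.card {t : Fin (n + 1) → FreeGroup (Fin m) //
        (∀ i, t i ∈ Set.range (FreeGroup.of : Fin m → FreeGroup (Fin m)) ∪
          Set.range fun i : Fin m => (FreeGroup.of i)⁻¹) ∧
        (List.ofFn t).prod = 1}) := by
  change s ∈ symmGens (Fin m) at hs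
  refine ⟨fun hn => ?_, fun _ => ?_⟩
  · exact card_wordsWithProd_of_even hn (inv_mem_symmGens hs)
  · change _ = Nat.card (wordsWithProd (symmGens (Fin m)) (n + 1) 1)
    rw [card_wordsWithProd_succ_one fun a ha => card_wordsWithProd_eq_of_mem n
      (inv_mem_symmGens ha) (inv_mem_symmGens hs), card_symmGens, Nat.card_fin]
    rfl

/-- (McKay) Let `F_m` be the free group on `m ≥ 1` generators with symmetric
generating set `S` (the generators and their inverses, `|S| = v = 2m`), and let
`s ∈ S`.  With `N_s(n)` the number of `n`-tuples from `S` with product `s⁻¹` and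
`N_e(n)` the number of `n`-tuples from `S` with product `1`, one has `N_s(n) = 0`
for even `n` and `v · N_s(n) = N_e(n+1)` for odd `n`. -/
theorem stmt_15 (m : ℕ) (hm : 1 ≤ m) (s : FreeGroup (Fin m))
    (hs : s ∈ Set.range (FreeGroup.of : Fin m → FreeGroup (Fin m)) ∪
      Set.range fun i : Fin m => (FreeGroup.of i)⁻¹) (n : ℕ) :
    (Even n →
      Nat.card {t : Fin n → FreeGroup (Fin m) //
        (∀ i, t i ∈ Set.range (FreeGroup.of : Fin m → FreeGroup (Fin m)) ∪
          Set.range fun i : Fin m => (FreeGroup.of i)⁻¹) ∧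
        (List.ofFn t).prod = s⁻¹} = 0) ∧
    (Odd n →
      2 * m * Nat.card {t : Fin n → FreeGroup (Fin m) //
        (∀ i, t i ∈ Set.range (FreeGroup.of : Fin m → FreeGroup (Fin m)) ∪
          Set.range fun i : Fin m => (FreeGroup.of i)⁻¹) ∧
        (List.ofFn t).prod = s⁻¹}
      = Nat.card {t : Fin (n + 1) → FreeGroup (Fin m) //
        (∀ i, t i ∈ Set.range (FreeGroup.of : Fin m → FreeGroup (Fin m)) ∪
          Set.range fun i : Fin m => (FreeGroup.of i)⁻¹) ∧
        (List.ofFn t).prod = 1}) :=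
  stmt_15_general m s hs n
end

section
/- Let G be a group containing an element of infinite order, and let T be a bounded linear operator on ℓ²(G) that commutes with the right regular representation, i.e. T ∘ R_h = R_h ∘ T for every h ∈ G, where (R_h f)(g) = f(g h). Then for every μ ∈ ℂ, the eigenspace ker(T − μ·Id) is either the zero subspace or infinite-dimensional. In particular, T has no discrete spectrum (no eigenvalue of finite multiplicity). -/
/-!
The kernel of `T - μ` is invariant under every `R_h`, since `T` commutes with `R_h`. If it were
finite-dimensional and nonzero, `R_w` would have an eigenvector `u` in it, i.e. `u (g * w) = ν u g`.
Along the orbit `g w^n` (`n ≥ 0` if `|ν| ≥ 1`, `n ≤ 0` otherwise) the values `|u|` never decrease,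
while the points `g w^n` are pairwise distinct because `w` has infinite order; this is impossible for
a nonzero `u ∈ ℓ²(G)`, whose values tend to `0` along the cofinite filter.
-/

open Filter Topology Function Set

theorem Memℓp.tendsto_cofinite_zero {α E : Type*} [NormedAddCommGroup E] {p : ENNReal}
    {f : α → E} (hf : Memℓp f p) (hp : p ≠ ⊤) : Tendsto f cofinite (𝓝 0) := by
  -- raising the exponent to `max p 1` covers `p = 0`, where `Memℓp` only means finite support
  set q := max p 1
  have hq : 0 < q.toReal := ENNReal.toReal_pos (by positivity) (max_ne_top hp ENNReal.one_ne_top)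
  have hsum := ((hf.of_exponent_ge (le_max_left p 1)).summable hq).tendsto_cofinite_zero
  have hroot : Tendsto (fun i => (‖f i‖ ^ q.toReal) ^ q.toReal⁻¹) cofinite (𝓝 0) := by
    simpa [Real.zero_rpow (inv_pos.2 hq).ne'] using hsum.rpow_const (Or.inr (inv_nonneg.2 hq.le))
  rw [tendsto_zero_iff_norm_tendsto_zero]
  refine hroot.congr fun i => ?_
  rw [← Real.rpow_mul (norm_nonneg _), mul_inv_cancel₀ hq.ne', Real.rpow_one]

section Orbit

variable {G 𝕜 E : Type*} [Group G] [NormedField 𝕜] [NormedAddCommGroup E] [NormedSpace 𝕜 E]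
  {f : G → E} {v : G}

theorem eq_zero_of_mul_right_eq_smul_of_one_le_norm (hf : Tendsto f cofinite (𝓝 0))
    (hv : ¬IsOfFinOrder v) {ν : 𝕜} (hν : 1 ≤ ‖ν‖) (hfv : ∀ g, f (g * v) = ν • f g) (g : G) :
    f g = 0 := by
  have horbit : ∀ n : ℕ, f (g * v ^ n) = ν ^ n • f g := by
    intro n
    induction n with
    | zero => simp
    | succ n ih => rw [pow_succ, ← mul_assoc, hfv, ih, pow_succ', mul_smul]
  have hinj : Injective fun n : ℕ => g * v ^ n :=
    (mul_right_injective g).comp (injective_pow_iff_not_isOfFinOrder.2 hv)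
  have hlim : Tendsto (fun n : ℕ => ‖f (g * v ^ n)‖) atTop (𝓝 0) := by
    rw [← Nat.cofinite_eq_atTop]
    exact (tendsto_zero_iff_norm_tendsto_zero.1 hf).comp hinj.tendsto_cofinite
  have hgrow : ∀ n : ℕ, ‖f g‖ ≤ ‖f (g * v ^ n)‖ := fun n => by
    rw [horbit, norm_smul, norm_pow]
    exact le_mul_of_one_le_left (norm_nonneg _) (one_le_pow₀ hν)
  exact norm_le_zero_iff.1 (ge_of_tendsto' hlim hgrow)

theorem eq_zero_of_mul_right_eq_smul (hf : Tendsto f cofinite (𝓝 0)) (hv : ¬IsOfFinOrder v)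
    (ν : 𝕜) (hfv : ∀ g, f (g * v) = ν • f g) : f = 0 := by
  funext g
  rcases eq_or_ne ν 0 with rfl | hν₀
  · simpa using hfv (g * v⁻¹)
  rcases le_or_gt 1 ‖ν‖ with hν | hν
  · exact eq_zero_of_mul_right_eq_smul_of_one_le_norm hf hv hν hfv g
  · refine eq_zero_of_mul_right_eq_smul_of_one_le_norm hf (v := v⁻¹) (ν := ν⁻¹)
      (isOfFinOrder_inv_iff.not.2 hv) ?_ (fun g => ?_) g
    · rw [norm_inv]
      exact one_le_inv₀ (norm_pos_iff.2 hν₀) |>.2 hν.le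
    · rw [← inv_smul_smul₀ hν₀ (f (g * v⁻¹)), ← hfv, inv_mul_cancel_right]

end Orbit

theorem LinearMap.mapsTo_ker_of_commute {R M : Type*} [Semiring R] [AddCommMonoid M] [Module R M]
    {f g : Module.End R M} (h : Commute f g) : MapsTo g (ker f) (ker f) := fun x hx => by
  simp only [SetLike.mem_coe, mem_ker] at hx ⊢
  rw [← Module.End.mul_apply, h.eq, Module.End.mul_apply, hx, map_zero]

theorem Module.End.exists_hasEigenvector_of_mapsTo {K V : Type*} [Field K] [IsAlgClosed K]
    [AddCommGroup V] [Module K V] {f : End K V} {p : Submodule K V} [FiniteDimensional K p]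
    (hp : p ≠ ⊥) (hf : MapsTo f p p) : ∃ μ : K, ∃ x ∈ p, f.HasEigenvector μ x := by
  have : Nontrivial p := Submodule.nontrivial_iff_ne_bot.2 hp
  obtain ⟨μ, hμ⟩ := exists_eigenvalue (f.restrict hf)
  obtain ⟨⟨x, hxp⟩, hx⟩ := hμ.exists_hasEigenvector
  refine ⟨μ, x, hxp, mem_eigenspace_iff.2 (congrArg Subtype.val hx.apply_eq_smul), ?_⟩
  simpa using hx.2

/-- Let `G` be a group containing an element of infinite order and let `T` be a
bounded operator on `ℓ²(G)` commuting with the right regular representation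
`(R_h f)(g) = f(g h)`.  Then for every `μ ∈ ℂ` the eigenspace `ker(T − μ·Id)` is
either zero or infinite-dimensional; in particular `T` has no eigenvalue of finite
multiplicity (no discrete spectrum). -/
theorem stmt_18 {G : Type*} [Group G]
    (hG : ∃ w : G, ∀ k : ℤ, k ≠ 0 → w ^ k ≠ 1)
    (T : lp (fun _ : G => ℂ) 2 →L[ℂ] lp (fun _ : G => ℂ) 2)
    (hT : ∃ R : G → (lp (fun _ : G => ℂ) 2 →L[ℂ] lp (fun _ : G => ℂ) 2),
      (∀ (h : G) (f : lp (fun _ : G => ℂ) 2) (g : G),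
        (R h f : ∀ _ : G, ℂ) g = (f : ∀ _ : G, ℂ) (g * h)) ∧
      ∀ h : G, T.comp (R h) = (R h).comp T) :
    ∀ μ : ℂ,
      LinearMap.ker ((T - μ • (1 : lp (fun _ : G => ℂ) 2 →L[ℂ] lp (fun _ : G => ℂ) 2) :
        lp (fun _ : G => ℂ) 2 →ₗ[ℂ] lp (fun _ : G => ℂ) 2)) = ⊥ ∨
      ¬ FiniteDimensional ℂ
        (LinearMap.ker ((T - μ • (1 : lp (fun _ : G => ℂ) 2 →L[ℂ] lp (fun _ : G => ℂ) 2) :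
          lp (fun _ : G => ℂ) 2 →ₗ[ℂ] lp (fun _ : G => ℂ) 2))) := by
  obtain ⟨w, hwk⟩ := hG
  obtain ⟨R, hR, hRT⟩ := hT
  have hw : ¬IsOfFinOrder w := by simpa [isOfFinOrder_iff_zpow_eq_one] using hwk
  intro μ
  rw [or_iff_not_imp_right, not_not]
  intro _
  by_contra hne
  have hcomm : Commute (T - μ • 1) (R w) :=
    Commute.sub_left (hRT w) ((Commute.one_left _).smul_left μ)
  obtain ⟨ν, u, -, hu⟩ := Module.End.exists_hasEigenvector_of_mapsTo hne
    (LinearMap.mapsTo_ker_of_commute (congrArg ContinuousLinearMap.toLinearMap hcomm.eq))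
  have hRu : R w u = ν • u := hu.apply_eq_smul
  refine hu.2 (lp.ext (eq_zero_of_mul_right_eq_smul
    (u.2.tendsto_cofinite_zero ENNReal.ofNat_ne_top) hw ν fun g => ?_))
  rw [← hR, hRu, lp.coeFn_smul, Pi.smul_apply]
end

section
/- Let G be a group containing an element of infinite order, and let T be a nonzero bounded linear operator on ℓ²(G) that commutes with the right regular representation, i.e. T ∘ R_h = R_h ∘ T for every h ∈ G. Then T is not a compact operator. Consequently, the image of the reduced group C*-algebra in the bounded operators on ℓ²(G) under the left regular representation contains no nonzero compact operator. -/
/-!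
If `T` commutes with right translations and `y = T x ≠ 0`, then `T` maps the bounded
sequence of translates `R_{wⁿ} x` to the translates `R_{wⁿ} y`. Since `w` has infinite
order, `g wⁿ` leaves every finite set, so these translates tend to `0` coordinatewise, while
all of them have norm `‖y‖ > 0`. Hence no subsequence converges in norm, contradicting
compactness of `T`.
-/

open Filter Topology
open scoped ENNReal

namespace lp

variable {α : Type*}

theorem tendsto_norm_cofinite_zero {E : α → Type*} [∀ i, NormedAddCommGroup (E i)] {p : ℝ≥0∞}
    (hp : 0 < p.toReal) (f : lp E p) : Tendsto (fun i => ‖f i‖) cofinite (𝓝 0) := by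
  have h := ((lp.memℓp f).summable hp).tendsto_cofinite_zero.rpow_const (p := p.toReal⁻¹)
    (Or.inr (inv_nonneg.2 hp.le))
  simpa [← Real.rpow_mul (norm_nonneg _), mul_inv_cancel₀ hp.ne',
    Real.zero_rpow (inv_ne_zero hp.ne')] using h

theorem eq_zero_of_tendsto_of_tendsto_apply {E : α → Type*} [∀ i, NormedAddCommGroup (E i)]
    {p : ℝ≥0∞} [Fact (1 ≤ p)] {ι : Type*} {l : Filter ι} [l.NeBot] {F : ι → lp E p} {f : lp E p}
    (hF : Tendsto F l (𝓝 f)) (hF0 : ∀ i, Tendsto (fun k => F k i) l (𝓝 0)) : f = 0 := by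
  ext i
  exact tendsto_nhds_unique
    (tendsto_pi_nhds.1 ((uniformContinuous_coe.continuous.tendsto f).comp hF) i) (hF0 i)

theorem norm_eq_of_apply_eq_comp_equiv {β E : Type*} [NormedAddCommGroup E] {p : ℝ≥0∞}
    (hp : 0 < p.toReal) (e : α ≃ β) {f : lp (fun _ : β => E) p} {f' : lp (fun _ : α => E) p}
    (h : ∀ a, f' a = f (e a)) : ‖f'‖ = ‖f‖ := by
  rw [norm_eq_tsum_rpow hp, norm_eq_tsum_rpow hp, ← e.tsum_eq]
  simp only [h]

end lp

theorem IsCompactOperator.exists_tendsto_subseq {𝕜 M₁ M₂ : Type*} [NontriviallyNormedField 𝕜]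
    [NormedAddCommGroup M₁] [NormedSpace 𝕜 M₁] [NormedAddCommGroup M₂] [NormedSpace 𝕜 M₂]
    {T : M₁ →L[𝕜] M₂} (hT : IsCompactOperator T) {u : ℕ → M₁}
    (hu : Bornology.IsBounded (Set.range u)) :
    ∃ l, ∃ φ : ℕ → ℕ, StrictMono φ ∧ Tendsto (fun n => T (u (φ n))) atTop (𝓝 l) := by
  obtain ⟨l, -, φ, hφ, hl⟩ := (hT.isCompact_closure_image_of_bounded hu).tendsto_subseq
    (x := fun n => T (u n)) fun n => subset_closure ⟨u n, ⟨n, rfl⟩, rfl⟩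
  exact ⟨l, φ, hφ, hl⟩

section RightTranslation

variable {G E : Type*} [Group G] [NormedAddCommGroup E] {p : ℝ≥0∞}
  {R : G → lp (fun _ : G => E) p → lp (fun _ : G => E) p}

theorem norm_rightTranslate (hp : 0 < p.toReal) (hR : ∀ h f g, R h f g = f (g * h)) (h : G)
    (f : lp (fun _ : G => E) p) : ‖R h f‖ = ‖f‖ :=
  lp.norm_eq_of_apply_eq_comp_equiv hp (Equiv.mulRight h) (hR h f)

theorem not_tendsto_rightTranslate_of_tendsto_cofinite [Fact (1 ≤ p)] (hp : p ≠ ∞)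
    (hR : ∀ h f g, R h f g = f (g * h)) {f : lp (fun _ : G => E) p} (hf : f ≠ 0)
    {k : ℕ → G} (hk : Tendsto k atTop cofinite) (l : lp (fun _ : G => E) p) :
    ¬ Tendsto (fun n => R (k n) f) atTop (𝓝 l) := by
  intro hl
  have hp' : 0 < p.toReal := ENNReal.toReal_pos (zero_lt_one.trans_le Fact.out).ne' hp
  have hl0 : l = 0 := lp.eq_zero_of_tendsto_of_tendsto_apply hl fun g => by
    simp only [hR]
    exact tendsto_zero_iff_norm_tendsto_zero.2 <| (lp.tendsto_norm_cofinite_zero hp' f).comp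
      ((mul_right_injective g).tendsto_cofinite.comp hk)
  have hnorm : ‖l‖ = ‖f‖ := tendsto_nhds_unique hl.norm (by simp [norm_rightTranslate hp' hR])
  exact hf (norm_eq_zero.1 (by rw [← hnorm, hl0, norm_zero]))

end RightTranslation

theorem tendsto_pow_cofinite_of_not_isOfFinOrder {G : Type*} [LeftCancelMonoid G] {w : G}
    (hw : ¬IsOfFinOrder w) : Tendsto (fun n : ℕ => w ^ n) atTop cofinite := by
  rw [← Nat.cofinite_eq_atTop]
  exact (injective_pow_iff_not_isOfFinOrder.2 hw).tendsto_cofinite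

/-- Let `G` be a group containing an element of infinite order and let `T` be a
nonzero bounded operator on `ℓ²(G)` commuting with the right regular representation
`(R_h f)(g) = f(g h)`.  Then `T` is not a compact operator; consequently, the image
of the reduced group C*-algebra under the left regular representation contains no
nonzero compact operator. -/
theorem stmt_19 {G : Type*} [Group G]
    (hG : ∃ w : G, ∀ k : ℤ, k ≠ 0 → w ^ k ≠ 1)
    (T : lp (fun _ : G => ℂ) 2 →L[ℂ] lp (fun _ : G => ℂ) 2)
    (hT0 : T ≠ 0)
    (hT : ∃ R : G → (lp (fun _ : G => ℂ) 2 →L[ℂ] lp (fun _ : G => ℂ) 2),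
      (∀ (h : G) (f : lp (fun _ : G => ℂ) 2) (g : G),
        (R h f : ∀ _ : G, ℂ) g = (f : ∀ _ : G, ℂ) (g * h)) ∧
      ∀ h : G, T.comp (R h) = (R h).comp T) :
    ¬ IsCompactOperator (⇑T) := by
  obtain ⟨w, hw⟩ := hG
  have hw : ¬IsOfFinOrder w := by
    simpa [isOfFinOrder_iff_zpow_eq_one] using hw
  obtain ⟨R, hR, hcomm⟩ := hT
  obtain ⟨x, hx⟩ : ∃ x, T x ≠ 0 := by
    by_contra! h
    exact hT0 (ContinuousLinearMap.ext h)
  intro hcpt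
  have hbdd : Bornology.IsBounded (Set.range fun n : ℕ => R (w ^ n) x) :=
    isBounded_iff_forall_norm_le.2 ⟨‖x‖, by
      rintro _ ⟨n, rfl⟩
      exact (norm_rightTranslate (by norm_num) hR _ x).le⟩
  obtain ⟨l, φ, hφ, hl⟩ := hcpt.exists_tendsto_subseq hbdd
  have hTR : ∀ n, T (R (w ^ φ n) x) = R (w ^ φ n) (T x) := fun n =>
    congrArg (· x) (hcomm (w ^ φ n))
  refine not_tendsto_rightTranslate_of_tendsto_cofinite (by norm_num) hR hx
    ((tendsto_pow_cofinite_of_not_isOfFinOrder hw).comp hφ.tendsto_atTop) l ?_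
  simpa only [Function.comp_apply, hTR] using hl
end
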